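/- arXiv:2503.24201 — 6 statements merged into one kernel-verified Lean document; each statement's English description precedes it below -/
import Mathlib

section
/- For integers m > n ≥ 2, define A_k = {r(k-r) : 1 ≤ r ≤ k-1} and T_{m,n} = {(M,N) : M·N = m² - n², M + N < 2m, 0 < M ≤ N < M + 2n}. Then |A_n ∩ A_m| ≤ |T_{m,n}|. -/
def A (k : ℕ) : Finset ℕ := (Finset.Icc 1 (k - 1)).image (fun r => r * (k - r))

def T (m n : ℕ) : Finset (ℕ × ℕ) :=
  ((Finset.Icc 1 (m^2)) ×ˢ (Finset.Icc 1 (m^2))).filter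
    (fun p => p.1 * p.2 = m^2 - n^2 ∧ p.1 + p.2 < 2*m ∧ p.1 ≤ p.2 ∧ p.2 < p.1 + 2*n)

lemma exists_b {k x : ℕ} (hx : x ∈ A k) : ∃ b, 4*x + b^2 = k^2 ∧ b + 2 ≤ k := by
  simp only [A, Finset.mem_image, Finset.mem_Icc] at hx
  obtain ⟨r, ⟨hr1, hr2⟩, hxr⟩ := hx
  have hk : 2 ≤ k := by omega
  set r' := min r (k - r) with hr'
  have h1 : 1 ≤ r' := by omega
  have h2 : 2 * r' ≤ k := by omega
  have hx' : x = r' * (k - r') := by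
    rcases min_cases r (k - r) with ⟨h, _⟩ | ⟨h, _⟩
    · rw [hr', h]; exact hxr.symm
    · rw [hr', h]
      have hkk : k - (k - r) = r := by omega
      rw [hkk, Nat.mul_comm]; exact hxr.symm
  refine ⟨k - 2*r', ?_, by omega⟩
  have hu : k - r' = r' + (k - 2*r') := by omega
  rw [hx', hu]
  have hk' : k = 2*r' + (k - 2*r') := by omega
  nlinarith [hk']

theorem stmt2 (m n : ℕ) (hmn : m > n) (hn : 2 ≤ n) :
    (A n ∩ A m).card ≤ (T m n).card := by
  classical
  apply Finset.card_le_card_of_injOn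
    (fun x => (Nat.sqrt (m^2 - 4*x) - Nat.sqrt (n^2 - 4*x),
               Nat.sqrt (m^2 - 4*x) + Nat.sqrt (n^2 - 4*x)))
  · intro x hx
    rw [Finset.mem_coe, Finset.mem_inter] at hx
    obtain ⟨b, hb, hb2⟩ := exists_b hx.1
    obtain ⟨a, ha, ha2⟩ := exists_b hx.2
    have hsa : Nat.sqrt (m^2 - 4*x) = a := by
      have h : m^2 - 4*x = a^2 := by omega
      rw [h, Nat.sqrt_eq']
    have hsb : Nat.sqrt (n^2 - 4*x) = b := by
      have h : n^2 - 4*x = b^2 := by omega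
      rw [h, Nat.sqrt_eq']
    have hmn2 : n^2 < m^2 := by nlinarith
    have hab : b < a := by
      by_contra hc
      push_neg at hc
      have := Nat.pow_le_pow_left hc 2
      omega
    have hprod : (a - b) * (a + b) = m^2 - n^2 := by
      have h1 : a^2 - b^2 = (a + b) * (a - b) := Nat.sq_sub_sq a b
      have h2 : a^2 - b^2 = m^2 - n^2 := by omega
      rw [Nat.mul_comm] at h1
      omega
    have hm2 : 2*m ≤ m^2 := by nlinarith
    simp only [Finset.mem_coe, T, Finset.mem_filter, Finset.mem_product, Finset.mem_Icc, hsa, hsb]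
    refine ⟨⟨⟨by omega, by omega⟩, by omega, by omega⟩, hprod, by omega, by omega, by omega⟩
  · intro x hx y hy heq
    simp only [Finset.mem_coe, Finset.mem_inter] at hx hy
    obtain ⟨b1, hb1, hb12⟩ := exists_b hx.1
    obtain ⟨a1, ha1, ha12⟩ := exists_b hx.2
    obtain ⟨b2, hb2, hb22⟩ := exists_b hy.1
    obtain ⟨a2, ha2, ha22⟩ := exists_b hy.2
    have hsa1 : Nat.sqrt (m^2 - 4*x) = a1 := by
      have h : m^2 - 4*x = a1^2 := by omega
      rw [h, Nat.sqrt_eq']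
    have hsb1 : Nat.sqrt (n^2 - 4*x) = b1 := by
      have h : n^2 - 4*x = b1^2 := by omega
      rw [h, Nat.sqrt_eq']
    have hsa2 : Nat.sqrt (m^2 - 4*y) = a2 := by
      have h : m^2 - 4*y = a2^2 := by omega
      rw [h, Nat.sqrt_eq']
    have hsb2 : Nat.sqrt (n^2 - 4*y) = b2 := by
      have h : n^2 - 4*y = b2^2 := by omega
      rw [h, Nat.sqrt_eq']
    have hmn2 : n^2 < m^2 := by nlinarith
    have hab1 : b1 < a1 := by
      by_contra hc; push_neg at hc
      have := Nat.pow_le_pow_left hc 2; omega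
    have hab2 : b2 < a2 := by
      by_contra hc; push_neg at hc
      have := Nat.pow_le_pow_left hc 2; omega
    simp only [hsa1, hsb1, hsa2, hsb2, Prod.mk.injEq] at heq
    have haa : a1 = a2 := by omega
    rw [haa] at ha1
    omega
end

section
/- Let m > n ≥ 2 with m even and n odd. Define A_k = {r(k-r) : 1 ≤ r ≤ k-1} and T_{m,n} = {(M,N) : M·N = m² - n², M + N < 2m, 0 < M ≤ N < M + 2n}. Then |A_n ∩ A_m| = |T_{m,n}|. -/
lemma memA_aux {k r x : ℕ} (h1 : 1 ≤ r) (h2 : 2*r ≤ k) (hx : x = r*(k-r)) :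
    ∃ u, 4*x + u^2 = k^2 ∧ u + 2 ≤ k ∧ u % 2 = k % 2 := by
  refine ⟨k - 2*r, ?_, by omega, by omega⟩
  have hk : k = 2*r + (k - 2*r) := by omega
  have hkr : k - r = r + (k - 2*r) := by omega
  subst hx
  rw [hkr]
  set u := k - 2*r with hu
  calc 4*(r*(r+u)) + u^2 = (2*r+u)^2 := by ring
  _ = k^2 := by rw [← hk]

lemma memA_iff {k x : ℕ} :
    x ∈ A k ↔ ∃ u, 4*x + u^2 = k^2 ∧ u + 2 ≤ k ∧ u % 2 = k % 2 := by
  constructor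
  · intro hx
    simp only [A, Finset.mem_image, Finset.mem_Icc] at hx
    obtain ⟨r, ⟨hr1, hr2⟩, hx⟩ := hx
    rcases le_or_gt (2*r) k with h | h
    · exact memA_aux hr1 h hx.symm
    · refine memA_aux (r := k - r) (by omega) (by omega) ?_
      have : k - (k - r) = r := by omega
      rw [this, Nat.mul_comm, hx]
  · rintro ⟨u, hu, hu2, hup⟩
    have hk : k = 2*((k-u)/2) + u := by omega
    set r := (k-u)/2 with hr
    have hr1 : 1 ≤ r := by omega
    have heq : 4*x + u^2 = 4*(r*(r+u)) + u^2 := by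
      rw [hu, hk]; ring
    have h4 : 4*x = 4*(r*(r+u)) := Nat.add_right_cancel heq
    have hx : x = r*(r+u) := by omega
    simp only [A, Finset.mem_image, Finset.mem_Icc]
    refine ⟨r, ⟨hr1, by omega⟩, ?_⟩
    have : k - r = r + u := by omega
    rw [this, hx]

lemma sqrt_of {x u k : ℕ} (h : 4*x + u^2 = k^2) : Nat.sqrt (k^2 - 4*x) = u := by
  have : k^2 - 4*x = u^2 := by omega
  rw [this, Nat.sqrt_eq']

theorem stmt3 (m n : ℕ) (hmn : m > n) (hn : 2 ≤ n) (hme : Even m) (hno : Odd n) :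
    (A n ∩ A m).card = (T m n).card := by
  obtain ⟨a, ha⟩ := hme
  obtain ⟨b, hb⟩ := hno
  have hm2 : m % 2 = 0 := by omega
  have hn2 : n % 2 = 1 := by omega
  have hn2m2 : n^2 < m^2 := Nat.pow_lt_pow_left hmn (by norm_num)
  apply Finset.card_bij
    (fun x _ => (Nat.sqrt (m^2 - 4*x) - Nat.sqrt (n^2 - 4*x),
                 Nat.sqrt (m^2 - 4*x) + Nat.sqrt (n^2 - 4*x)))
  · -- maps into T
    intro x hx
    rw [Finset.mem_inter] at hx
    obtain ⟨v, hvx, hv2, hvp⟩ := memA_iff.mp hx.1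
    obtain ⟨u, hux, hu2, hup⟩ := memA_iff.mp hx.2
    rw [sqrt_of hvx, sqrt_of hux]
    have hvu : v < u := by
      by_contra h
      push_neg at h
      have := Nat.pow_le_pow_left h 2
      omega
    have hmul : (u - v) * (u + v) = m^2 - n^2 := by
      have hux' : (4*x + u^2 : ℤ) = (m:ℤ)^2 := by exact_mod_cast hux
      have hvx' : (4*x + v^2 : ℤ) = (n:ℤ)^2 := by exact_mod_cast hvx
      zify [hvu.le, hn2m2.le]
      linear_combination hux' - hvx'
    have hmm : 2*m ≤ m^2 := by
      have : 2 ≤ m := by omega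
      calc 2*m ≤ m*m := Nat.mul_le_mul_right m this
      _ = m^2 := (sq m).symm
    simp only [T, Finset.mem_filter, Finset.mem_product, Finset.mem_Icc]
    refine ⟨⟨⟨by omega, by omega⟩, by omega, by omega⟩, hmul, by omega, by omega, by omega⟩
  · -- injective
    intro x₁ hx₁ x₂ hx₂ heq
    rw [Finset.mem_inter] at hx₁ hx₂
    obtain ⟨v₁, hvx₁, hv2₁, hvp₁⟩ := memA_iff.mp hx₁.1
    obtain ⟨u₁, hux₁, hu2₁, hup₁⟩ := memA_iff.mp hx₁.2
    obtain ⟨v₂, hvx₂, hv2₂, hvp₂⟩ := memA_iff.mp hx₂.1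
    obtain ⟨u₂, hux₂, hu2₂, hup₂⟩ := memA_iff.mp hx₂.2
    rw [sqrt_of hvx₁, sqrt_of hux₁, sqrt_of hvx₂, sqrt_of hux₂] at heq
    have hvu₁ : v₁ < u₁ := by
      by_contra h; push_neg at h
      have := Nat.pow_le_pow_left h 2; omega
    have hvu₂ : v₂ < u₂ := by
      by_contra h; push_neg at h
      have := Nat.pow_le_pow_left h 2; omega
    have h1 : u₁ - v₁ = u₂ - v₂ := congrArg Prod.fst heq
    have h2 : u₁ + v₁ = u₂ + v₂ := congrArg Prod.snd heq
    have hu : u₁ = u₂ := by omega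
    rw [hu] at hux₁
    have := hux₁.trans hux₂.symm
    have := Nat.add_right_cancel this
    omega
  · -- surjective
    rintro ⟨M, N⟩ hMN
    simp only [T, Finset.mem_filter, Finset.mem_product, Finset.mem_Icc] at hMN
    obtain ⟨⟨⟨hM1, hMm2⟩, hN1, hNm2⟩, hprod, hsum, hle, hlt⟩ := hMN
    have hMm : M*N + n^2 = m^2 := by
      rw [hprod]; exact Nat.sub_add_cancel hn2m2.le
    -- M and N are odd
    have hMNodd : (M*N) % 2 = 1 := by
      have e1 : m^2 = 4*(a*a) := by rw [ha]; ring
      have e2 : n^2 = 4*(b*b+b) + 1 := by rw [hb]; ring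
      rw [e1, e2] at hMm
      generalize a*a = X at hMm
      generalize b*b+b = Y at hMm
      generalize M*N = P at hMm
      omega
    have hodd := Nat.odd_mul.mp (Nat.odd_iff.mpr hMNodd)
    have hModd : M % 2 = 1 := Nat.odd_iff.mp hodd.1
    have hNodd : N % 2 = 1 := Nat.odd_iff.mp hodd.2
    obtain ⟨v, hv⟩ : ∃ v, N = M + 2*v := ⟨(N-M)/2, by omega⟩
    -- v is odd
    have hvodd : v % 2 = 1 := by
      by_contra h
      obtain ⟨c, hc⟩ : ∃ c, M = 2*c + 1 := ⟨(M-1)/2, by omega⟩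
      obtain ⟨d, hd⟩ : ∃ d, v = 2*d := ⟨v/2, by omega⟩
      have e1 : M*N = 4*(c*c + 2*c*d + c + d) + 1 := by
        rw [hv, hc, hd]; ring
      have e2 : m^2 = 4*(a*a) := by rw [ha]; ring
      have e3 : n^2 = 4*(b*b+b) + 1 := by rw [hb]; ring
      rw [e1, e2, e3] at hMm
      generalize c*c + 2*c*d + c + d = X at hMm
      generalize a*a = Y at hMm
      generalize b*b+b = Z at hMm
      omega
    set u := M + v with hu
    have huodd : u % 2 = 0 := by omega
    have hvn : v + 2 ≤ n := by omega
    have hum : u + 2 ≤ m := by omega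
    -- x
    have hneq : n = 2*((n-v)/2) + v := by omega
    set r := (n-v)/2 with hr
    set x := r*(r+v) with hx
    have hxn : 4*x + v^2 = n^2 := by
      rw [hx, hneq]; ring
    have hu2 : u^2 = M*N + v^2 := by
      rw [hu, hv]; ring
    have hxm : 4*x + u^2 = m^2 := by
      rw [hu2]; omega
    refine ⟨x, ?_, ?_⟩
    · rw [Finset.mem_inter]
      exact ⟨memA_iff.mpr ⟨v, hxn, hvn, by omega⟩,
             memA_iff.mpr ⟨u, hxm, hum, by omega⟩⟩
    · rw [sqrt_of hxn, sqrt_of hxm]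
      simp only [Prod.mk.injEq]
      omega
end

section
/- For integers m > n ≥ 2, |A_n ∩ A_m| ≤ d(m² - n²), where d is the number-of-divisors function and A_k = {r(k-r) : 1 ≤ r ≤ k-1}. -/
lemma memA (k x : ℕ) (hx : x ∈ A k) : ∃ b : ℕ, 4 * x + b ^ 2 = k ^ 2 := by
  simp only [A, Finset.mem_image, Finset.mem_Icc] at hx
  obtain ⟨r, ⟨hr1, hr2⟩, rfl⟩ := hx
  have hrk : r ≤ k := by omega
  refine ⟨((k : ℤ) - 2 * r).natAbs, ?_⟩
  zify [hrk]
  rw [sq_abs]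
  ring

lemma sqrtA (k x : ℕ) (hx : x ∈ A k) :
    4 * x + (Nat.sqrt (k ^ 2 - 4 * x)) ^ 2 = k ^ 2 := by
  obtain ⟨b, hb⟩ := memA k x hx
  have h1 : k ^ 2 - 4 * x = b ^ 2 := by omega
  rw [h1, pow_two, Nat.sqrt_eq', ← pow_two]
  exact hb

theorem stmt6 (m n : ℕ) (hmn : m > n) (hn : 2 ≤ n) :
    (A n ∩ A m).card ≤ (m^2 - n^2).divisors.card := by
  have hmn2 : n ^ 2 < m ^ 2 := Nat.pow_lt_pow_left hmn (by norm_num)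
  apply Finset.card_le_card_of_injOn
    (fun x => Nat.sqrt (m ^ 2 - 4 * x) + Nat.sqrt (n ^ 2 - 4 * x))
  · intro x hx
    simp only [Finset.coe_inter, Set.mem_inter_iff, Finset.mem_coe] at hx
    have hbn := sqrtA n x hx.1
    have ham := sqrtA m x hx.2
    set b := Nat.sqrt (n ^ 2 - 4 * x) with hbdef
    set a := Nat.sqrt (m ^ 2 - 4 * x) with hadef
    have hba : b < a := by
      by_contra hc
      have : a ^ 2 ≤ b ^ 2 := Nat.pow_le_pow_left (by omega) 2
      omega
    rw [Finset.mem_coe, Nat.mem_divisors]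
    constructor
    · have key : m ^ 2 = (a + b) * (a - b) + n ^ 2 := by
        obtain ⟨c, hc⟩ : ∃ c, a = b + c := ⟨a - b, by omega⟩
        rw [hc]
        have hcc : b + c - b = c := by omega
        rw [hcc]
        nlinarith [hbn, ham]
      exact ⟨a - b, Nat.sub_eq_of_eq_add key⟩
    · omega
  · intro x hx y hy hxy
    simp only [Finset.coe_inter, Set.mem_inter_iff, Finset.mem_coe] at hx hy
    have hbx := sqrtA n x hx.1
    have hax := sqrtA m x hx.2
    have hby := sqrtA n y hy.1
    have hay := sqrtA m y hy.2
    set b := Nat.sqrt (n ^ 2 - 4 * x)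
    set a := Nat.sqrt (m ^ 2 - 4 * x)
    set b' := Nat.sqrt (n ^ 2 - 4 * y)
    set a' := Nat.sqrt (m ^ 2 - 4 * y)
    have h : a + b = a' + b' := by simpa using hxy
    clear hxy
    clear_value a b a' b'
    have ha1 : 1 ≤ a := by nlinarith
    have heq : a ^ 2 + b' ^ 2 = a' ^ 2 + b ^ 2 := by omega
    have hz : ((b' : ℤ) - b) * (a + a' + b + b') = 0 := by
      have h' : (a : ℤ) + b = a' + b' := by exact_mod_cast h
      have heq' : (a : ℤ) ^ 2 + b' ^ 2 = a' ^ 2 + b ^ 2 := by exact_mod_cast heq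
      nlinarith [h', heq']
    have hbb : b = b' := by
      rcases mul_eq_zero.mp hz with h1 | h2 <;> omega
    subst hbb
    have h4 : 4 * x + b ^ 2 = 4 * y + b ^ 2 := by rw [hbx, hby]
    omega
end

section
/- Let p ≥ 3 be a prime, s ≥ 1, and α an integer with 2^α > p^s. Set m = 2^α p^s + 1 and n = m - 2. For each 0 ≤ i ≤ s-1, the pair M_i = 2p^(s-i), N_i = 2^(α+1) p^i satisfies M_i · N_i = m² - n², M_i + N_i < 2m, 0 < M_i ≤ N_i, and N_i < M_i + 2n. -/
theorem stmt9 (p s α : ℕ) (hp : p.Prime) (hp3 : 3 ≤ p) (hs : 1 ≤ s)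
    (h : p^s < 2^α) (i : ℕ) (hi : i ≤ s - 1) :
    (2 * p^(s-i)) * (2^(α+1) * p^i) = (2^α * p^s + 1)^2 - (2^α * p^s + 1 - 2)^2 ∧
    2 * p^(s-i) + 2^(α+1) * p^i < 2 * (2^α * p^s + 1) ∧
    0 < 2 * p^(s-i) ∧
    2 * p^(s-i) ≤ 2^(α+1) * p^i ∧
    2^(α+1) * p^i < 2 * p^(s-i) + 2 * (2^α * p^s + 1 - 2) := by
  have hp1 : 1 ≤ p := by omega
  have his : i ≤ s := le_trans hi (Nat.sub_le s 1)
  have hi1 : i + 1 ≤ s := by omega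
  have hps : p^(s-i) * p^i = p^s := by rw [← pow_add]; congr 1; omega
  have hA : p^(s-i) ≤ p^s := Nat.pow_le_pow_right hp1 (Nat.sub_le s i)
  have hC : p^i * p ≤ p^s := by
    calc p^i * p = p^(i+1) := (pow_succ p i).symm
    _ ≤ p^s := Nat.pow_le_pow_right hp1 hi1
  have hq3 : 3 ≤ p^s := hp3.trans (Nat.le_self_pow (by omega) p)
  have hv1 : 1 ≤ p^i := Nat.one_le_pow _ _ (by omega)
  have hu1 : 1 ≤ p^(s-i) := Nat.one_le_pow _ _ (by omega)
  have ha4 : 4 ≤ 2^α := by linarith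
  have hpos : 0 < 2^α * p^s := by positivity
  have k1 : 2^α * (p^i * p) ≤ 2^α * p^s := Nat.mul_le_mul_left _ hC
  have k0 : 2^α * p^i * 3 ≤ 2^α * (p^i * p) := by
    calc 2^α * p^i * 3 ≤ 2^α * p^i * p := Nat.mul_le_mul_left _ hp3
    _ = 2^α * (p^i * p) := by ring
  have k3 : 3 * (2^α * p^i) ≤ 2^α * p^s := by linarith
  have k4 : 2^α ≤ 2^α * p^i := Nat.le_mul_of_pos_right _ hv1
  have k5 : 2^α * 3 ≤ 2^α * p^s := Nat.mul_le_mul_left _ hq3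
  obtain ⟨w, hw⟩ : ∃ w, 2^α * p^s = w + 1 :=
    ⟨2^α * p^s - 1, (Nat.succ_pred_eq_of_pos hpos).symm⟩
  refine ⟨?_, ?_, ?_, ?_, ?_⟩
  · have lhs : (2 * p^(s-i)) * (2^(α+1) * p^i) = 4 * (w + 1) := by
      rw [← hw, ← hps, pow_succ]; ring
    rw [lhs, hw, show w+1+1-2 = w by omega,
      show (w+1+1)^2 = w^2 + 4*(w+1) by ring, Nat.add_sub_cancel_left]
  · rw [hw, pow_succ]; linarith
  · positivity
  · rw [pow_succ]; linarith
  · rw [hw, pow_succ, show w+1+1-2 = w by omega]; linarith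
end

section
/- For every positive integer s there exist integers m > n ≥ 2 with |A_n ∩ A_m| = s, where A_k = {r(k-r) : 1 ≤ r ≤ k-1}. -/
/-- The "r" value for the j-th common element. -/
def bb (s j : ℕ) : ℕ := ((3 ^ j - 1) / 2) * (4 ^ s * 3 ^ (s - j) + 1)

/-- The j-th element of the intersection `A (12^s - 1) ∩ A (12^s + 1)`. -/
def X (s j : ℕ) : ℕ := bb s j * ((12 ^ s - 1) - bb s j)

lemma pow_fact (s j : ℕ) (hjs : j ≤ s) : 3 ^ j * (4 ^ s * 3 ^ (s - j)) = 12 ^ s := by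
  have h1 : (3:ℕ) ^ j * 3 ^ (s - j) = 3 ^ s := by
    rw [← pow_add]; congr 1; omega
  calc 3 ^ j * (4 ^ s * 3 ^ (s - j)) = 4 ^ s * (3 ^ j * 3 ^ (s - j)) := by ring
    _ = 4 ^ s * 3 ^ s := by rw [h1]
    _ = (4*3) ^ s := (mul_pow 4 3 s).symm
    _ = 12 ^ s := by norm_num

lemma e_lt_f (s j j' : ℕ) (hs : 1 ≤ s) (hj : j ≤ s) : 3 ^ j < 4 ^ s * 3 ^ (s - j') := by
  calc 3 ^ j ≤ 3 ^ s := Nat.pow_le_pow_right (by norm_num) hj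
    _ < 4 ^ s := Nat.pow_lt_pow_left (by norm_num) (by omega)
    _ ≤ 4 ^ s * 3 ^ (s - j') := Nat.le_mul_of_pos_right _ (by positivity)

lemma f_ge_four (s j : ℕ) (hs : 1 ≤ s) : 4 ≤ 4 ^ s * 3 ^ (s - j) := by
  calc (4:ℕ) = 4 ^ 1 * 1 := by norm_num
    _ ≤ 4 ^ s * 3 ^ (s - j) :=
      Nat.mul_le_mul (Nat.pow_le_pow_right (by norm_num) hs) (Nat.one_le_pow _ _ (by norm_num))

lemma Xident (s j : ℕ) (hs : 1 ≤ s) (hj1 : 1 ≤ j) (hjs : j ≤ s) :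
    4 * X s j + (4 ^ s * 3 ^ (s - j) - 3 ^ j) ^ 2 = (12 ^ s - 1) ^ 2
    ∧ X s j ∈ A (12 ^ s - 1) ∧ X s j ∈ A (12 ^ s + 1) := by
  obtain ⟨F, hF⟩ : ∃ F, 4 ^ s * 3 ^ (s - j) = F := ⟨_, rfl⟩
  have hEF : 3 ^ j * F = 12 ^ s := hF ▸ pow_fact s j hjs
  have hElt : 3 ^ j < F := hF ▸ e_lt_f s j j hs hjs
  have hF4 : 4 ≤ F := hF ▸ f_ge_four s j hs
  obtain ⟨G, hG⟩ : ∃ G, F = G + 4 := ⟨F - 4, by omega⟩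
  subst hG
  have h12 : 1 ≤ 12 ^ s := Nat.one_le_pow _ _ (by norm_num)
  have hmod : 3 ^ j % 2 = 1 := by simp [Nat.pow_mod]
  obtain ⟨h, hh⟩ : ∃ h, 3 ^ j = 2 * h + 1 := ⟨3 ^ j / 2, by omega⟩
  have h3j : 3 ≤ 3 ^ j := by
    calc (3:ℕ) = 3 ^ 1 := by norm_num
      _ ≤ 3 ^ j := Nat.pow_le_pow_right (by norm_num) hj1
  have hh1 : 1 ≤ h := by omega
  have hefz : (2 * (h:ℤ) + 1) * ((G:ℤ) + 4) = 12 ^ s := by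
    have : ((2 * h + 1) * (G + 4) : ℕ) = ((12 ^ s : ℕ)) := by rw [← hh]; exact hEF
    exact_mod_cast this
  have hbb : bb s j = h * (G + 5) := by
    unfold bb; rw [hF]; congr 1; omega
  have hsum1 : bb s j + (h + 1) * (G + 3) = 12 ^ s - 1 := by
    rw [hbb]; zify [h12]; linear_combination hefz
  have hC1 : 1 ≤ (h + 1) * (G + 3) := Nat.mul_pos (by omega) (by omega)
  have hcomp : (12 ^ s - 1) - bb s j = (h + 1) * (G + 3) :=
    (eq_tsub_of_add_eq ((add_comm _ _).trans hsum1)).symm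
  have hbb1 : 1 ≤ bb s j := by rw [hbb]; exact Nat.mul_pos hh1 (by omega)
  have hXval : X s j = (h * (G + 5)) * ((h + 1) * (G + 3)) := by
    unfold X; rw [hcomp, hbb]
  refine ⟨?_, ?_, ?_⟩
  · rw [hXval, hF, hh]
    zify [show 2 * h + 1 ≤ G + 4 by omega, h12]
    linear_combination ((2 * (h:ℤ) + 1) * ((G:ℤ) + 4) + 12 ^ s - 2) * hefz
  · simp only [A, Finset.mem_image, Finset.mem_Icc]
    refine ⟨bb s j, ⟨hbb1, ?_⟩, rfl⟩
    exact Nat.le_sub_of_add_le (le_trans (Nat.add_le_add_left hC1 _) (le_of_eq hsum1))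
  · simp only [A, Finset.mem_image, Finset.mem_Icc]
    have hsum2 : h * (G + 3) + (h + 1) * (G + 5) = 12 ^ s + 1 := by
      zify; linear_combination hefz
    have hcomp2 : (12 ^ s + 1) - h * (G + 3) = (h + 1) * (G + 5) :=
      (eq_tsub_of_add_eq ((add_comm _ _).trans hsum2)).symm
    have hC2 : 1 ≤ (h + 1) * (G + 5) := Nat.mul_pos (by omega) (by omega)
    refine ⟨h * (G + 3), ⟨Nat.mul_pos hh1 (by omega), ?_⟩, ?_⟩
    · have hle : h * (G + 3) + 1 ≤ 12 ^ s + 1 :=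
        le_trans (Nat.add_le_add_left hC2 _) (le_of_eq hsum2)
      exact Nat.le_sub_of_add_le hle
    · show h * (G + 3) * ((12 ^ s + 1) - h * (G + 3)) = X s j
      rw [hcomp2, hXval]; ring

lemma U_lt (s j j' : ℕ) (hs : 1 ≤ s) (hlt : j < j') (hj' : j' ≤ s) :
    4 ^ s * 3 ^ (s - j') - 3 ^ j' < 4 ^ s * 3 ^ (s - j) - 3 ^ j := by
  have h1 : 3 ^ j < 4 ^ s * 3 ^ (s - j') := e_lt_f s j j' hs (by omega)
  have h2 : 3 ^ j' < 4 ^ s * 3 ^ (s - j') := e_lt_f s j' j' hs hj'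
  have h4 : 3 ^ j < 4 ^ s * 3 ^ (s - j) := e_lt_f s j j hs (by omega)
  have h3 : 3 * (4 ^ s * 3 ^ (s - j')) ≤ 4 ^ s * 3 ^ (s - j) := by
    have hp : (3:ℕ) ^ (s - j' + 1) ≤ 3 ^ (s - j) := Nat.pow_le_pow_right (by norm_num) (by omega)
    calc 3 * (4 ^ s * 3 ^ (s - j')) = 4 ^ s * 3 ^ (s - j' + 1) := by ring
      _ ≤ 4 ^ s * 3 ^ (s - j) := Nat.mul_le_mul_left _ hp
  have h0 : 0 < 3 ^ j' := by positivity
  zify [h2.le, h4.le]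
  have h1' : ((3:ℤ) ^ j) < 4 ^ s * 3 ^ (s - j') := by exact_mod_cast h1
  have h2' : ((3:ℤ) ^ j') < 4 ^ s * 3 ^ (s - j') := by exact_mod_cast h2
  have h3' : 3 * ((4:ℤ) ^ s * 3 ^ (s - j')) ≤ 4 ^ s * 3 ^ (s - j) := by exact_mod_cast h3
  have h0' : (0:ℤ) < 3 ^ j' := by exact_mod_cast h0
  linarith

set_option maxHeartbeats 1000000 in
lemma complete (s : ℕ) (hs : 1 ≤ s) (x : ℕ)
    (hx : x ∈ A (12 ^ s - 1) ∩ A (12 ^ s + 1)) :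
    ∃ j, (1 ≤ j ∧ j ≤ s) ∧ x = X s j := by
  obtain ⟨s', rfl⟩ : ∃ s', s = s' + 1 := ⟨s - 1, by omega⟩
  set N := s' + 1 with hN
  have h12 : (1:ℕ) ≤ 12 ^ N := Nat.one_le_pow _ _ (by norm_num)
  simp only [A, Finset.mem_inter, Finset.mem_image, Finset.mem_Icc] at hx
  obtain ⟨⟨r, ⟨hr1, hr2⟩, hrx⟩, ⟨t, ⟨ht1, ht2⟩, htx⟩⟩ := hx
  have hr2' : r ≤ 12 ^ N - 1 := by omega
  have ht2' : t ≤ 12 ^ N := by omega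
  zify [hr2', h12] at hrx
  zify [show t ≤ 12 ^ N + 1 by omega] at htx
  set u : ℤ := (12:ℤ) ^ N - 1 - 2 * r with hu
  set y : ℤ := (12:ℤ) ^ N + 1 - 2 * t with hy
  have h4n : 4 * (x:ℤ) + u ^ 2 = ((12:ℤ) ^ N - 1) ^ 2 := by
    rw [hu]; linear_combination (-4 : ℤ) * hrx
  have h4m : 4 * (x:ℤ) + y ^ 2 = ((12:ℤ) ^ N + 1) ^ 2 := by
    rw [hy]; linear_combination (-4 : ℤ) * htx
  have hP2 : (12:ℤ) ^ N = 2 * (6 * 12 ^ s') := by rw [hN]; ring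
  have huodd : u = 2 * (6 * 12 ^ s' - 1 - r) + 1 := by rw [hu, hP2]; ring
  have hyodd : y = 2 * (6 * 12 ^ s' - t) + 1 := by rw [hy, hP2]; ring
  set U : ℕ := u.natAbs with hU
  set Y : ℕ := y.natAbs with hYdef
  have hUsq : (U:ℤ) ^ 2 = u ^ 2 := by
    rw [hU, ← Int.abs_eq_natAbs]; exact sq_abs u
  have hYsq : (Y:ℤ) ^ 2 = y ^ 2 := by
    rw [hYdef, ← Int.abs_eq_natAbs]; exact sq_abs y
  have hYU : (Y:ℤ) ^ 2 = (U:ℤ) ^ 2 + 4 * 12 ^ N := by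
    rw [hYsq, hUsq]; linear_combination h4m - h4n
  have hYUn : Y ^ 2 = U ^ 2 + 4 * 12 ^ N := by exact_mod_cast hYU
  have hUo : U % 2 = 1 := by
    have h1 : Odd u := ⟨_, huodd⟩
    exact Nat.odd_iff.mp (Int.natAbs_odd.mpr h1)
  have hYo : Y % 2 = 1 := by
    have h1 : Odd y := ⟨_, hyodd⟩
    exact Nat.odd_iff.mp (Int.natAbs_odd.mpr h1)
  obtain ⟨a, ha⟩ : ∃ a, Y = 2 * a + 1 := ⟨Y / 2, by omega⟩
  obtain ⟨b, hb⟩ : ∃ b, U = 2 * b + 1 := ⟨U / 2, by omega⟩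
  have hpow_pos : 0 < 12 ^ N := by positivity
  have hYgtU : U < Y := by nlinarith [hYUn, hpow_pos]
  have hab : b < a := by omega
  rw [ha, hb] at hYUn
  have hYUz : ((2:ℤ) * a + 1) ^ 2 = (2 * b + 1) ^ 2 + 4 * 12 ^ N := by exact_mod_cast hYUn
  have key4 : (4:ℤ) * (((a:ℤ) - b) * ((a:ℤ) + b + 1)) = 4 * 12 ^ N := by
    linear_combination hYUz
  have key' : ((a:ℤ) - b) * ((a:ℤ) + b + 1) = 12 ^ N :=
    mul_left_cancel₀ (by norm_num : (4:ℤ) ≠ 0) key4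
  have key : (a - b) * (a + b + 1) = 12 ^ N := by
    zify [hab.le]; exact key'
  set e' : ℕ := a - b with he'
  set f' : ℕ := a + b + 1 with hf'
  have hef_sum : e' + f' = Y := by omega
  have hef_diff : f' - e' = U := by omega
  have he'lt : e' < f' := by omega
  have h12split : (12:ℕ) ^ N = 4 ^ N * 3 ^ N := by
    rw [show (12:ℕ) = 4 * 3 by norm_num, mul_pow]
  have odd_dvd : ∀ o : ℕ, o % 2 = 1 → o ∣ 12 ^ N → ∃ i ≤ N, o = 3 ^ i := by
    intro o ho hdvd
    have hco2 : Nat.Coprime o 2 := Nat.coprime_two_right.mpr (Nat.odd_iff.mpr ho)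
    have hco4 : Nat.Coprime o (4 ^ N) := by
      have h4eq : (4:ℕ) ^ N = 2 ^ (2 * N) := by rw [pow_mul]; norm_num
      rw [h4eq]; exact hco2.pow_right _
    have hdvd' : o ∣ 4 ^ N * 3 ^ N := h12split ▸ hdvd
    have h3 : o ∣ 3 ^ N := hco4.dvd_of_dvd_mul_left hdvd'
    obtain ⟨i, hi, rfl⟩ := (Nat.dvd_prime_pow Nat.prime_three).mp h3
    exact ⟨i, hi, rfl⟩
  have hYle : Y ≤ 12 ^ N - 1 := by
    have ht1' : (1:ℤ) ≤ t := by exact_mod_cast ht1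
    have ht2'' : (t:ℤ) ≤ 12 ^ N := by exact_mod_cast ht2'
    have hy1 : y ≤ (12:ℤ) ^ N - 1 := by rw [hy]; linarith
    have hy2 : -((12:ℤ) ^ N - 1) ≤ y := by rw [hy]; linarith
    have habs : |y| ≤ (12:ℤ) ^ N - 1 := abs_le.mpr ⟨hy2, hy1⟩
    have hYz : (Y:ℤ) ≤ (12:ℤ) ^ N - 1 := by
      rw [hYdef, ← Int.abs_eq_natAbs]; exact habs
    zify [h12]
    exact hYz
  rcases Nat.even_or_odd e' with heven | hodd
  · -- e' even, so f' odd: contradiction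
    have hfodd : f' % 2 = 1 := by
      have hE := Nat.even_iff.mp heven
      omega
    obtain ⟨i, hi, hfi⟩ := odd_dvd f' hfodd ⟨e', by rw [← key]; ring⟩
    have hcancel : e' * 3 ^ i = 4 ^ N * 3 ^ (N - i) * 3 ^ i := by
      have hpf : 3 ^ i * (4 ^ N * 3 ^ (N - i)) = 12 ^ N := pow_fact N i hi
      calc e' * 3 ^ i = e' * f' := by rw [hfi]
        _ = 12 ^ N := key
        _ = 4 ^ N * 3 ^ (N - i) * 3 ^ i := by rw [← hpf]; ring
    have he'eq : e' = 4 ^ N * 3 ^ (N - i) :=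
      Nat.eq_of_mul_eq_mul_right (by positivity) hcancel
    have hlt : f' < e' := by
      rw [hfi, he'eq]; exact e_lt_f N i i (by omega) hi
    omega
  · -- e' odd
    have heodd : e' % 2 = 1 := Nat.odd_iff.mp hodd
    obtain ⟨i, hi, hei⟩ := odd_dvd e' heodd ⟨f', key.symm⟩
    have hcancel : f' * 3 ^ i = 4 ^ N * 3 ^ (N - i) * 3 ^ i := by
      have hpf : 3 ^ i * (4 ^ N * 3 ^ (N - i)) = 12 ^ N := pow_fact N i hi
      calc f' * 3 ^ i = e' * f' := by rw [hei]; ring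
        _ = 12 ^ N := key
        _ = 4 ^ N * 3 ^ (N - i) * 3 ^ i := by rw [← hpf]; ring
    have hf'eq : f' = 4 ^ N * 3 ^ (N - i) :=
      Nat.eq_of_mul_eq_mul_right (by positivity) hcancel
    have hi1 : 1 ≤ i := by
      by_contra hcon
      have hi0 : i = 0 := by omega
      have hfval : f' = 12 ^ N := by
        rw [hf'eq, hi0, Nat.sub_zero, show (12:ℕ) = 4 * 3 by norm_num, mul_pow]
      have he1 : e' = 1 := by rw [hei, hi0]; norm_num
      have hYval : Y = 12 ^ N + 1 := by rw [← hef_sum, he1, hfval]; omega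
      omega
    refine ⟨i, ⟨hi1, hi⟩, ?_⟩
    have hUeq : U = 4 ^ N * 3 ^ (N - i) - 3 ^ i := by
      rw [← hef_diff, hf'eq, hei]
    obtain ⟨hid, _, _⟩ := Xident N i hs hi1 hi
    have helt : 3 ^ i ≤ 4 ^ N * 3 ^ (N - i) := (e_lt_f N i i hs hi).le
    zify [h12, helt] at hid
    zify [helt] at hUeq
    have hsq : (U:ℤ) ^ 2 = ((4:ℤ) ^ N * 3 ^ (N - i) - 3 ^ i) ^ 2 := by rw [hUeq]
    rw [← hUsq] at h4n
    have h4eq : 4 * (x:ℤ) = 4 * (X N i : ℤ) := by linarith [h4n, hid, hsq]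
    have hxX : (x:ℤ) = X N i := by linarith
    exact_mod_cast hxX

theorem stmt10 (s : ℕ) (hs : 0 < s) :
    ∃ m n : ℕ, m > n ∧ 2 ≤ n ∧ (A n ∩ A m).card = s := by
  have h12 : 12 ≤ 12 ^ s := Nat.le_self_pow (by omega) 12
  refine ⟨12 ^ s + 1, 12 ^ s - 1, by omega, by omega, ?_⟩
  have hset : A (12 ^ s - 1) ∩ A (12 ^ s + 1) = (Finset.Icc 1 s).image (X s) := by
    ext x
    simp only [Finset.mem_image, Finset.mem_Icc]
    constructor
    · intro hx
      obtain ⟨j, ⟨hj1, hj2⟩, hxj⟩ := complete s hs x hx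
      exact ⟨j, ⟨hj1, hj2⟩, hxj.symm⟩
    · rintro ⟨j, ⟨hj1, hj2⟩, rfl⟩
      obtain ⟨_, hn, hm⟩ := Xident s j hs hj1 hj2
      exact Finset.mem_inter.mpr ⟨hn, hm⟩
  rw [hset, Finset.card_image_of_injOn, Nat.card_Icc]
  · omega
  · intro j1 hj1 j2 hj2 heq
    simp only [Finset.coe_Icc, Set.mem_Icc] at hj1 hj2
    by_contra hne
    obtain ⟨id1, _, _⟩ := Xident s j1 hs hj1.1 hj1.2
    obtain ⟨id2, _, _⟩ := Xident s j2 hs hj2.1 hj2.2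
    rw [heq] at id1
    have hsq := Nat.add_left_cancel (id1.trans id2.symm)
    have hUeq : 4 ^ s * 3 ^ (s - j1) - 3 ^ j1 = 4 ^ s * 3 ^ (s - j2) - 3 ^ j2 :=
      Nat.pow_left_injective (by norm_num) hsq
    rcases Nat.lt_or_ge j1 j2 with h | h
    · exact absurd hUeq (Nat.ne_of_gt (U_lt s j1 j2 hs h hj2.2))
    · have h' : j2 < j1 := by omega
      exact absurd hUeq.symm (Nat.ne_of_gt (U_lt s j2 j1 hs h' hj1.2))
end

section
/- Let H = (V, E) be a hypergraph with m distinct edges, each edge having cardinality at least R, and such that any two distinct edges intersect in at most k elements, where R > 0 and k ≥ 0. Then |V| ≥ m R² / (R + (m-1)k). -/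
theorem stmt12 {α : Type*} [DecidableEq α] (V : Finset α) (E : Finset (Finset α))
    (m R k : ℕ) (hR : 0 < R)
    (hEV : ∀ e ∈ E, e ⊆ V) (hm : E.card = m)
    (hsize : ∀ e ∈ E, R ≤ e.card)
    (hint : ∀ e ∈ E, ∀ e' ∈ E, e ≠ e' → (e ∩ e').card ≤ k) :
    (m * R^2 : ℝ) / (R + (m - 1) * k) ≤ V.card := by
  rcases Nat.eq_zero_or_pos m with hm0 | hm1
  · subst hm0
    simp only [Nat.cast_zero, zero_mul, zero_div]
    positivity
  set d : α → ℕ := fun v => (E.filter (fun e => v ∈ e)).card with hd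
  have hsum1 : ∑ v ∈ V, d v = ∑ e ∈ E, e.card := by
    simp only [hd, Finset.card_filter]
    rw [Finset.sum_comm]
    refine Finset.sum_congr rfl fun e he => ?_
    rw [← Finset.card_filter, Finset.filter_mem_eq_inter,
      Finset.inter_eq_right.mpr (hEV e he)]
  have hsum2 : ∑ v ∈ V, (d v)^2 = ∑ e ∈ E, ∑ e' ∈ E, (e ∩ e').card := by
    have : ∀ v, (d v)^2 = ∑ e ∈ E, ∑ e' ∈ E,
        (if v ∈ e then 1 else 0) * (if v ∈ e' then 1 else 0) := by
      intro v
      simp only [hd, Finset.card_filter, sq, Finset.sum_mul_sum]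
    simp only [this]
    rw [Finset.sum_comm]
    refine Finset.sum_congr rfl fun e he => ?_
    rw [Finset.sum_comm]
    refine Finset.sum_congr rfl fun e' he' => ?_
    have : ∀ v, (if v ∈ e then 1 else 0) * (if v ∈ e' then 1 else 0)
        = (if v ∈ e ∩ e' then 1 else 0) := by
      intro v; by_cases h1 : v ∈ e <;> by_cases h2 : v ∈ e' <;> simp [h1, h2]
    simp only [this]
    rw [← Finset.card_filter, Finset.filter_mem_eq_inter,
      Finset.inter_eq_right.mpr ((Finset.inter_subset_left).trans (hEV e he))]
  set S := ∑ e ∈ E, e.card with hS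
  have hSR : m * R ≤ S := by
    rw [hS, ← hm]
    calc E.card * R = ∑ _e ∈ E, R := by rw [Finset.sum_const, smul_eq_mul]
    _ ≤ ∑ e ∈ E, e.card := Finset.sum_le_sum hsize
  have hbound : ∑ e ∈ E, ∑ e' ∈ E, (e ∩ e').card ≤ S + m * (m-1) * k := by
    rw [hS]
    have : m * (m-1) * k = ∑ _e ∈ E, (m-1)*k := by
      rw [Finset.sum_const, smul_eq_mul, hm]; ring
    rw [this, ← Finset.sum_add_distrib]
    refine Finset.sum_le_sum fun e he => ?_
    rw [← Finset.sum_erase_add _ _ he, Finset.inter_self, add_comm]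
    refine add_le_add le_rfl ?_
    calc ∑ e' ∈ E.erase e, (e ∩ e').card ≤ ∑ _e' ∈ E.erase e, k :=
          Finset.sum_le_sum fun e' he' =>
            hint e he e' (Finset.mem_of_mem_erase he') (Ne.symm (Finset.ne_of_mem_erase he'))
    _ = (m-1) * k := by rw [Finset.sum_const, smul_eq_mul, Finset.card_erase_of_mem he, hm]
  have hCS : ((S:ℝ))^2 ≤ (V.card : ℝ) * (S + m * (m-1) * k) := by
    have h1 : ((∑ v ∈ V, (d v : ℝ)))^2 ≤ (V.card : ℝ) * ∑ v ∈ V, (d v : ℝ)^2 :=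
      sq_sum_le_card_mul_sum_sq
    have h2 : (∑ v ∈ V, (d v : ℝ)) = (S : ℝ) := by
      rw [← Nat.cast_sum, hsum1]
    have h3 : (∑ v ∈ V, (d v : ℝ)^2) ≤ ((S + m * (m-1) * k : ℕ) : ℝ) := by
      have h3' : ∑ v ∈ V, (d v)^2 ≤ S + m * (m-1) * k := by rw [hsum2]; exact hbound
      exact_mod_cast h3'
    calc ((S:ℝ))^2 = (∑ v ∈ V, (d v : ℝ))^2 := by rw [h2]
    _ ≤ (V.card : ℝ) * ∑ v ∈ V, (d v : ℝ)^2 := h1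
    _ ≤ (V.card : ℝ) * ((S + m * (m-1) * k : ℕ) : ℝ) :=
        mul_le_mul_of_nonneg_left h3 (by positivity)
    _ = (V.card : ℝ) * (S + m * (m-1) * k) := by push_cast [Nat.cast_sub hm1]; ring
  clear_value S
  have hm1' : (1:ℝ) ≤ m := by exact_mod_cast hm1
  have hRS : (m:ℝ) * R ≤ S := by exact_mod_cast hSR
  have hk : (0:ℝ) ≤ k := Nat.cast_nonneg k
  have hRpos : (0:ℝ) < R := by exact_mod_cast hR
  have hden : (0:ℝ) < R + ((m:ℝ) - 1) * k := by
    have h : (0:ℝ) ≤ ((m:ℝ) - 1) * k := mul_nonneg (sub_nonneg.mpr hm1') hk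
    linarith
  rw [div_le_iff₀ hden]
  have hmpos : (0:ℝ) < m := by exact_mod_cast hm1
  have hSpos : (0:ℝ) < S := lt_of_lt_of_le (mul_pos hmpos hRpos) hRS
  have hcnn : (0:ℝ) ≤ (m:ℝ) * ((m:ℝ)-1) * k :=
    mul_nonneg (mul_nonneg (by linarith) (by linarith)) hk
  have hSc : (0:ℝ) < (S:ℝ) + (m:ℝ) * ((m:ℝ)-1) * k := by linarith
  have h1 : (m:ℝ) * R^2 * S ≤ (S:ℝ)^2 * R := by
    calc (m:ℝ) * R^2 * S = ((m:ℝ)*R) * ((S:ℝ)*R) := by ring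
    _ ≤ (S:ℝ) * ((S:ℝ)*R) := mul_le_mul_of_nonneg_right hRS (by positivity)
    _ = (S:ℝ)^2 * R := by ring
  have h2 : (m:ℝ) * R^2 * ((m:ℝ) * ((m:ℝ)-1) * k) ≤ (S:ℝ)^2 * (((m:ℝ)-1) * k) := by
    have hsq : ((m:ℝ)*R) * ((m:ℝ)*R) ≤ (S:ℝ) * S :=
      mul_le_mul hRS hRS (by positivity) hSpos.le
    calc (m:ℝ) * R^2 * ((m:ℝ) * ((m:ℝ)-1) * k)
        = (((m:ℝ)*R) * ((m:ℝ)*R)) * (((m:ℝ)-1) * k) := by ring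
    _ ≤ ((S:ℝ) * S) * (((m:ℝ)-1) * k) :=
        mul_le_mul_of_nonneg_right hsq (mul_nonneg (by linarith) hk)
    _ = (S:ℝ)^2 * (((m:ℝ)-1) * k) := by ring
  have key : (m:ℝ) * R^2 * ((S:ℝ) + (m:ℝ) * ((m:ℝ)-1) * k)
      ≤ (S:ℝ)^2 * (R + ((m:ℝ)-1) * k) := by
    have e1 : (m:ℝ) * R^2 * ((S:ℝ) + (m:ℝ) * ((m:ℝ)-1) * k)
        = (m:ℝ)*R^2*S + (m:ℝ)*R^2*((m:ℝ) * ((m:ℝ)-1) * k) := by ring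
    have e2 : (S:ℝ)^2 * (R + ((m:ℝ)-1) * k)
        = (S:ℝ)^2*R + (S:ℝ)^2*(((m:ℝ)-1)*k) := by ring
    rw [e1, e2]
    exact add_le_add h1 h2
  have chain : (m:ℝ) * R^2 * ((S:ℝ) + (m:ℝ) * ((m:ℝ)-1) * k)
      ≤ (V.card : ℝ) * (R + ((m:ℝ)-1) * k) * ((S:ℝ) + (m:ℝ) * ((m:ℝ)-1) * k) := by
    calc (m:ℝ) * R^2 * ((S:ℝ) + (m:ℝ) * ((m:ℝ)-1) * k)
        ≤ (S:ℝ)^2 * (R + ((m:ℝ)-1) * k) := key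
    _ ≤ ((V.card : ℝ) * ((S:ℝ) + (m:ℝ) * ((m:ℝ)-1) * k)) * (R + ((m:ℝ)-1) * k) :=
        mul_le_mul_of_nonneg_right hCS hden.le
    _ = (V.card : ℝ) * (R + ((m:ℝ)-1) * k) * ((S:ℝ) + (m:ℝ) * ((m:ℝ)-1) * k) := by ring
  exact le_of_mul_le_mul_right chain hSc
end
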